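/- arXiv:2604.26757 — 6 statements merged into one kernel-verified Lean document; each statement's English description precedes it below -/
import Mathlib

section
/- Let s be a nonzero complex number and set γ = s². For positive integers i, j define R̂_{i,j} = s^{i+j-2} · Σ_{k=1}^{min(i,j)} C(i-1,k-1)·C(j-1,k-1)·(1 - 1/γ)^{k-1}, where C(·,·) denotes binomial coefficients. Then for all positive integers N₁, N₂, letting R̂ denote the N₁×N₂ matrix with entries R̂_{i,j} (1 ≤ i ≤ N₁, 1 ≤ j ≤ N₂), the determinant of the N₂×N₂ matrix I_{N₂} + (γ−1)·R̂ᵀR̂ equals γ^{N₁N₂}. -/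
/-- The entry `R̂_{i,j}` (for `1 ≤ i, j`), where
`R̂_{i,j} = s^{i+j-2} · Σ_{k=1}^{min(i,j)} C(i-1,k-1)·C(j-1,k-1)·(1 - 1/s²)^{k-1}`. -/
noncomputable def Rhat (s : ℂ) (i j : ℕ) : ℂ :=
  s ^ (i + j - 2) *
    ∑ k ∈ Finset.range (min i j),
      (Nat.choose (i - 1) k : ℂ) * (Nat.choose (j - 1) k : ℂ) * (1 - 1 / s ^ 2) ^ k


open Finset Matrix
namespace DRH

/-- 0-based core sum. -/
noncomputable def Sc (s : ℂ) (i j : ℕ) : ℂ :=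
  ∑ k ∈ Finset.range (min i j + 1),
    (Nat.choose i k : ℂ) * (Nat.choose j k : ℂ) * (1 - 1 / s ^ 2) ^ k

lemma Sc_zero (s : ℂ) (j : ℕ) : Sc s 0 j = 1 := by simp [Sc]

lemma Sc_eq_range (s : ℂ) (i j m : ℕ) (h : min i j + 1 ≤ m) :
    Sc s i j = ∑ k ∈ Finset.range m,
      (Nat.choose i k : ℂ) * (Nat.choose j k : ℂ) * (1 - 1 / s ^ 2) ^ k := by
  apply Finset.sum_subset (Finset.range_subset_range.mpr h)
  intro k hk hk2
  simp only [Finset.mem_range] at hk hk2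
  have : i < k ∨ j < k := by omega
  rcases this with h' | h' <;> simp [Nat.choose_eq_zero_of_lt h']

lemma sum_choose_cast (a k : ℕ) :
    ∑ b ∈ Finset.range a, (Nat.choose b k : ℂ) = (Nat.choose a (k + 1) : ℂ) := by
  induction a with
  | zero => simp
  | succ a ih =>
    rw [Finset.sum_range_succ, ih, Nat.choose_succ_succ]
    push_cast; ring

lemma Sc_rec (s : ℂ) (i a : ℕ) :
    Sc s (i + 1) a = Sc s i a + (1 - 1 / s ^ 2) * ∑ b ∈ Finset.range a, Sc s i b := by
  set t : ℂ := 1 - 1 / s ^ 2 with ht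
  rw [Sc_eq_range s (i+1) a (a+1) (by omega), Sc_eq_range s i a (a+1) (by omega)]
  have hb : ∀ b ∈ Finset.range a, Sc s i b =
      ∑ k ∈ Finset.range (a+1), (Nat.choose i k : ℂ) * (Nat.choose b k : ℂ) * t ^ k := by
    intro b hb
    exact Sc_eq_range s i b (a+1) (by have := Finset.mem_range.mp hb; omega)
  rw [Finset.sum_congr rfl hb, Finset.sum_comm]
  have hhs : ∀ k, (∑ b ∈ Finset.range a, (Nat.choose i k : ℂ) * (Nat.choose b k : ℂ) * t ^ k)
      = (Nat.choose i k : ℂ) * (Nat.choose a (k+1) : ℂ) * t ^ k := by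
    intro k
    rw [← Finset.sum_mul, ← Finset.mul_sum, sum_choose_cast]
  rw [Finset.sum_congr rfl (fun k _ => hhs k)]
  rw [Finset.sum_range_succ' (fun k => ((Nat.choose (i+1) k : ℂ)) * (Nat.choose a k : ℂ) * t ^ k) a,
      Finset.sum_range_succ' (fun k => ((Nat.choose i k : ℂ)) * (Nat.choose a k : ℂ) * t ^ k) a,
      Finset.mul_sum,
      Finset.sum_range_succ (fun k => t * ((Nat.choose i k : ℂ) * (Nat.choose a (k+1) : ℂ) * t ^ k)) a]
  simp only [Nat.choose_succ_succ i, Nat.choose_self, Nat.choose_succ_self, Nat.cast_zero]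
  simp only [Nat.succ_eq_add_one, Nat.choose_zero_right, Nat.cast_one, mul_zero, zero_mul,
    mul_one, add_zero, pow_zero, one_mul, Nat.cast_add]
  have key : ∀ x ∈ Finset.range a,
      ((Nat.choose i x : ℂ) + (Nat.choose i (x+1) : ℂ)) * (Nat.choose a (x+1) : ℂ) * t ^ (x+1)
        = (Nat.choose i (x+1) : ℂ) * (Nat.choose a (x+1) : ℂ) * t ^ (x+1)
          + t * ((Nat.choose i x : ℂ) * (Nat.choose a (x+1) : ℂ) * t ^ x) := by
    intro x _; ring
  rw [Finset.sum_congr rfl key, Finset.sum_add_distrib]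
  ring


noncomputable def Tf (s : ℂ) (a b : ℕ) : ℂ :=
  if b < a then s ^ ((a : ℤ) - b) - s ^ ((a : ℤ) - b - 2) else if a = b then 1 else 0

lemma zz1 {s : ℂ} (hs : s ≠ 0) (m n : ℕ) : s ^ ((m : ℤ) - n) = s ^ m / s ^ n := by
  rw [zpow_sub₀ hs, zpow_natCast, zpow_natCast]

lemma zz2 {s : ℂ} (hs : s ≠ 0) (m n : ℕ) :
    s ^ ((m : ℤ) - n - 2) = s ^ m / s ^ n / s ^ 2 := by
  rw [zpow_sub₀ hs, zpow_sub₀ hs, zpow_natCast, zpow_natCast,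
    show (2:ℤ) = ((2:ℕ):ℤ) by norm_num, zpow_natCast]

lemma Tf_self (s : ℂ) (a : ℕ) : Tf s a a = 1 := by simp [Tf]

lemma Tf_lt (s : ℂ) (a b : ℕ) (h : b < a) :
    Tf s a b = s ^ ((a : ℤ) - b) - s ^ ((a : ℤ) - b - 2) := by simp [Tf, h]

lemma Tf_gt (s : ℂ) (a b : ℕ) (h : a < b) : Tf s a b = 0 := by
  simp [Tf, Nat.lt_asymm h, Nat.ne_of_lt h]

/-- Sum truncation: terms with Tf-zero vanish beyond `a`. -/
lemma sum_Tf_trunc (s : ℂ) (N a : ℕ) (ha : a < N) (g : ℕ → ℂ) :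
    ∑ b ∈ Finset.range N, Tf s a b * g b
      = ∑ b ∈ Finset.range (a + 1), Tf s a b * g b := by
  refine (Finset.sum_subset (Finset.range_subset_range.mpr ha) ?_).symm
  intro b _ hb
  have : a < b := by simp only [Finset.mem_range] at hb; omega
  rw [Tf_gt s a b this, zero_mul]

/-- Key identity (B): the row recursion through `Tf`. -/
lemma keyB {s : ℂ} (hs : s ≠ 0) (i a N : ℕ) (ha : a < N) :
    s * ∑ b ∈ Finset.range N, Tf s a b * (s ^ (i + b) * Sc s i b)
      = s ^ (i + 1 + a) * Sc s (i + 1) a := by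
  rw [sum_Tf_trunc s N a ha, Finset.sum_range_succ, Tf_self, one_mul,
      Sc_rec s i a, Finset.mul_sum]
  have key : ∀ b ∈ Finset.range a,
      Tf s a b * (s ^ (i + b) * Sc s i b)
        = s ^ (i + a) * ((1 - 1 / s ^ 2) * Sc s i b) := by
    intro b hb
    have hba : b < a := Finset.mem_range.mp hb
    rw [Tf_lt s a b hba, zz1 hs, zz2 hs]
    have h1 : (s : ℂ) ^ b ≠ 0 := pow_ne_zero _ hs
    have h2 : (s : ℂ) ^ 2 ≠ 0 := pow_ne_zero _ hs
    field_simp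
    ring_nf
  rw [Finset.sum_congr rfl key, ← Finset.mul_sum]
  have hp : (s : ℂ) ^ (i + 1 + a) = s * s ^ (i + a) := by rw [← pow_succ']; ring_nf
  rw [hp]
  ring

lemma keyA_le {s : ℂ} (hs : s ≠ 0) (a b N : ℕ) (hbN : b < N) (hba : b ≤ a) :
    s ^ 2 * ∑ c ∈ Finset.range N, Tf s a c * Tf s b c
      = (if a = b then 1 else 0) + (s ^ 2 - 1) * (s ^ a * s ^ b) := by
  have hres : ∑ c ∈ Finset.range N, Tf s a c * Tf s b c
      = ∑ c ∈ Finset.range (b + 1), Tf s a c * Tf s b c := by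
    refine (Finset.sum_subset (Finset.range_subset_range.mpr hbN) ?_).symm
    intro c _ hc
    have : b < c := by simp only [Finset.mem_range] at hc; omega
    rw [Tf_gt s b c this, mul_zero]
  rw [hres, Finset.sum_range_succ, Tf_self, mul_one]
  set f : ℕ → ℂ := fun c => s ^ ((a : ℤ) + b - 2 * c) - s ^ ((a : ℤ) + b - 2 * c - 2) with hf
  have tele : ∀ c ∈ Finset.range b, Tf s a c * Tf s b c = f c - f (c + 1) := by
    intro c hc
    have hcb : c < b := Finset.mem_range.mp hc
    have m1 : s ^ ((a : ℤ) - c) * s ^ ((b : ℤ) - c) = s ^ ((a : ℤ) + b - 2 * c) := by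
      rw [← zpow_add₀ hs]; congr 1; ring
    have m2 : s ^ ((a : ℤ) - c) * s ^ ((b : ℤ) - c - 2) = s ^ ((a : ℤ) + b - 2 * c - 2) := by
      rw [← zpow_add₀ hs]; congr 1; ring
    have m3 : s ^ ((a : ℤ) - c - 2) * s ^ ((b : ℤ) - c) = s ^ ((a : ℤ) + b - 2 * c - 2) := by
      rw [← zpow_add₀ hs]; congr 1; ring
    have m4 : s ^ ((a : ℤ) - c - 2) * s ^ ((b : ℤ) - c - 2)
        = s ^ ((a : ℤ) + b - 2 * c - 4) := by
      rw [← zpow_add₀ hs]; congr 1; ring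
    have hfc1 : f (c + 1) = s ^ ((a : ℤ) + b - 2 * c - 2) - s ^ ((a : ℤ) + b - 2 * c - 4) := by
      rw [hf]
      simp only
      rw [show (a : ℤ) + b - 2 * ((c : ℕ) + 1 : ℕ) = (a : ℤ) + b - 2 * c - 2 by push_cast; ring]
      rw [show (a : ℤ) + b - 2 * c - 2 - 2 = (a : ℤ) + b - 2 * c - 4 by ring]
    rw [Tf_lt s a c (lt_of_lt_of_le hcb hba), Tf_lt s b c hcb, hfc1, hf]
    simp only
    rw [sub_mul, mul_sub, mul_sub, m1, m2, m3, m4]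
  rw [Finset.sum_congr rfl tele, Finset.sum_range_sub' f b]
  have hf0 : f 0 = s ^ ((a : ℤ) + b) - s ^ ((a : ℤ) + b - 2) := by
    rw [hf]
    simp only
    rw [show (a : ℤ) + b - 2 * ((0 : ℕ) : ℤ) - 2 = (a : ℤ) + b - 2 by push_cast; ring]
    rw [show (a : ℤ) + b - 2 * ((0 : ℕ) : ℤ) = (a : ℤ) + b by push_cast; ring]
  have hfb : f b = s ^ ((a : ℤ) - b) - s ^ ((a : ℤ) - b - 2) := by
    rw [hf]
    simp only
    rw [show (a : ℤ) + b - 2 * (b : ℤ) - 2 = (a : ℤ) - b - 2 by ring]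
    rw [show (a : ℤ) + b - 2 * (b : ℤ) = (a : ℤ) - b by ring]
  have p2 : s ^ 2 * s ^ ((a : ℤ) + b - 2) = s ^ ((a : ℤ) + b) := by
    rw [← zpow_natCast s 2, ← zpow_add₀ hs]; congr 1; push_cast; ring
  have p3 : (s : ℂ) ^ a * s ^ b = s ^ ((a : ℤ) + b) := by
    rw [← zpow_natCast s a, ← zpow_natCast s b, ← zpow_add₀ hs]
  by_cases hab : a = b
  · subst hab
    have q1 : s ^ ((a : ℤ) - a) = 1 := by
      rw [show (a : ℤ) - a = 0 by ring, zpow_zero]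
    have q2 : s ^ 2 * s ^ ((a : ℤ) - a - 2) = 1 := by
      rw [← zpow_natCast s 2, ← zpow_add₀ hs,
        show ((2 : ℕ) : ℤ) + ((a : ℤ) - a - 2) = 0 by push_cast; ring, zpow_zero]
    rw [Tf_self, if_pos rfl, hf0, hfb, q1, p3]
    linear_combination q2 - p2
  · have hlt : b < a := lt_of_le_of_ne hba (Ne.symm hab)
    rw [Tf_lt s a b hlt, if_neg hab, hf0, hfb, p3]
    linear_combination -p2

lemma keyA {s : ℂ} (hs : s ≠ 0) (a b N : ℕ) (haN : a < N) (hbN : b < N) :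
    s ^ 2 * ∑ c ∈ Finset.range N, Tf s a c * Tf s b c
      = (if a = b then 1 else 0) + (s ^ 2 - 1) * (s ^ a * s ^ b) := by
  rcases le_total b a with h | h
  · exact keyA_le hs a b N hbN h
  · have h2 := keyA_le hs b a N haN h
    calc s ^ 2 * ∑ c ∈ Finset.range N, Tf s a c * Tf s b c
        = s ^ 2 * ∑ c ∈ Finset.range N, Tf s b c * Tf s a c := by
          congr 1; exact Finset.sum_congr rfl fun c _ => mul_comm _ _
      _ = (if b = a then 1 else 0) + (s ^ 2 - 1) * (s ^ b * s ^ a) := h2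
      _ = (if a = b then 1 else 0) + (s ^ 2 - 1) * (s ^ a * s ^ b) := by
          rw [mul_comm ((s : ℂ) ^ b)]
          congr 1
          simp [eq_comm]

noncomputable def Tm (s : ℂ) (N : ℕ) : Matrix (Fin N) (Fin N) ℂ :=
  Matrix.of fun a b => Tf s a.1 b.1

noncomputable def vv (s : ℂ) (N : ℕ) (i : ℕ) : Fin N → ℂ :=
  fun j => s ^ (i + j.1) * Sc s i j.1

noncomputable def Mm (s : ℂ) (N : ℕ) (n : ℕ) : Matrix (Fin N) (Fin N) ℂ :=
  1 + (s ^ 2 - 1) • ∑ i ∈ Finset.range n, Matrix.vecMulVec (vv s N i) (vv s N i)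

lemma mulVec_vv {s : ℂ} (hs : s ≠ 0) (N i : ℕ) :
    s • (Tm s N).mulVec (vv s N i) = vv s N (i + 1) := by
  funext a
  simp only [Pi.smul_apply, Matrix.mulVec, dotProduct, smul_eq_mul, Tm, vv,
    Matrix.of_apply]
  rw [Fin.sum_univ_eq_sum_range (fun b => Tf s a.1 b * (s ^ (i + b) * Sc s i b)) N]
  exact keyB hs i a.1 N a.2

lemma TmTmT {s : ℂ} (hs : s ≠ 0) (N : ℕ) :
    (s ^ 2) • (Tm s N * (Tm s N)ᵀ)
      = 1 + (s ^ 2 - 1) • Matrix.vecMulVec (vv s N 0) (vv s N 0) := by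
  ext a b
  simp only [Matrix.smul_apply, Matrix.mul_apply, Matrix.transpose_apply, Tm, Matrix.of_apply,
    Matrix.add_apply, Matrix.one_apply, Matrix.vecMulVec_apply, vv, smul_eq_mul, Sc_zero,
    mul_one, Nat.zero_add]
  rw [Fin.sum_univ_eq_sum_range (fun c => Tf s a.1 c * Tf s b.1 c) N]
  rw [keyA hs a.1 b.1 N a.2 b.2]
  congr 1
  simp [Fin.ext_iff]

lemma conj_vecMulVec {N : ℕ} (A : Matrix (Fin N) (Fin N) ℂ) (x y : Fin N → ℂ) :
    A * Matrix.vecMulVec x y * Aᵀ = Matrix.vecMulVec (A.mulVec x) (A.mulVec y) := by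
  ext a b
  simp only [Matrix.mul_apply, Matrix.vecMulVec_apply, Matrix.mulVec, dotProduct,
    Matrix.transpose_apply, Finset.sum_mul, Finset.mul_sum]
  refine Finset.sum_congr rfl fun c _ => Finset.sum_congr rfl fun d _ => by ring

lemma smul_smul_vecMulVec {N : ℕ} (s : ℂ) (x y : Fin N → ℂ) :
    Matrix.vecMulVec (s • x) (s • y) = (s ^ 2) • Matrix.vecMulVec x y := by
  ext a b
  simp [Matrix.vecMulVec_apply]
  ring

lemma Mstep {s : ℂ} (hs : s ≠ 0) (N n : ℕ) :
    Mm s N (n + 1) = (s ^ 2) • (Tm s N * Mm s N n * (Tm s N)ᵀ) := by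
  unfold Mm
  rw [Matrix.mul_add, Matrix.mul_one, Matrix.add_mul, smul_add]
  rw [TmTmT hs N]
  rw [Matrix.mul_smul, Matrix.smul_mul, smul_comm ((s : ℂ) ^ 2) (s ^ 2 - 1)]
  rw [Matrix.mul_sum, Matrix.sum_mul, Finset.smul_sum, Finset.smul_sum]
  have hterm : ∀ i ∈ Finset.range n,
      (s ^ 2) • (Tm s N * Matrix.vecMulVec (vv s N i) (vv s N i) * (Tm s N)ᵀ)
        = Matrix.vecMulVec (vv s N (i + 1)) (vv s N (i + 1)) := by
    intro i _
    rw [conj_vecMulVec, ← smul_smul_vecMulVec, mulVec_vv hs]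
  rw [Finset.sum_congr rfl hterm]
  rw [Finset.sum_range_succ'
    (fun i => (s ^ 2 - 1) • Matrix.vecMulVec (vv s N i) (vv s N i)) n, Finset.smul_sum]
  abel

lemma det_Tm (s : ℂ) (N : ℕ) : (Tm s N).det = 1 := by
  have h : (Tm s N).BlockTriangular OrderDual.toDual := by
    intro a b hab
    have : (a : ℕ) < b := hab
    simpa [Tm] using Tf_gt s a.1 b.1 this
  rw [Matrix.det_of_lowerTriangular _ h]
  simp [Tm, Tf_self]

lemma det_Mm {s : ℂ} (hs : s ≠ 0) (N n : ℕ) : (Mm s N n).det = (s ^ 2) ^ (n * N) := by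
  induction n with
  | zero => simp [Mm]
  | succ n ih =>
    rw [Mstep hs N n, Matrix.det_smul, Matrix.det_mul, Matrix.det_mul, det_Tm,
      Matrix.det_transpose, det_Tm, ih, Fintype.card_fin]
    rw [show (n + 1) * N = N + n * N by ring, pow_add]
    ring

lemma Rhat_eq (s : ℂ) (i j : ℕ) : Rhat s (i + 1) (j + 1) = s ^ (i + j) * Sc s i j := by
  have h1 : i + 1 + (j + 1) - 2 = i + j := by omega
  have h2 : min (i + 1) (j + 1) = min i j + 1 := by omega
  rw [Rhat, Sc, h1, h2]
  simp

end DRH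

theorem det_one_add_RhatT_Rhat (s : ℂ) (hs : s ≠ 0) (N₁ N₂ : ℕ) (hN₁ : 0 < N₁)
    (hN₂ : 0 < N₂) :
    ((1 : Matrix (Fin N₂) (Fin N₂) ℂ) +
        (s ^ 2 - 1) •
          ((Matrix.of fun (i : Fin N₁) (j : Fin N₂) => Rhat s (i.1 + 1) (j.1 + 1)).transpose *
            Matrix.of fun (i : Fin N₁) (j : Fin N₂) => Rhat s (i.1 + 1) (j.1 + 1))).det =
      (s ^ 2) ^ (N₁ * N₂) := by
  have hM : ((1 : Matrix (Fin N₂) (Fin N₂) ℂ) +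
      (s ^ 2 - 1) •
        ((Matrix.of fun (i : Fin N₁) (j : Fin N₂) => Rhat s (i.1 + 1) (j.1 + 1)).transpose *
          Matrix.of fun (i : Fin N₁) (j : Fin N₂) => Rhat s (i.1 + 1) (j.1 + 1)))
      = DRH.Mm s N₂ N₁ := by
    unfold DRH.Mm
    congr 1
    congr 1
    ext a b
    simp only [Matrix.mul_apply, Matrix.transpose_apply, Matrix.of_apply, Matrix.sum_apply,
      Matrix.vecMulVec_apply, DRH.vv]
    rw [Fin.sum_univ_eq_sum_range
      (fun i => Rhat s (i + 1) (a.1 + 1) * Rhat s (i + 1) (b.1 + 1)) N₁]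
    refine Finset.sum_congr rfl fun i _ => ?_
    rw [DRH.Rhat_eq, DRH.Rhat_eq]
  rw [hM, DRH.det_Mm hs N₂ N₁]
end

section
/- Let s be a nonzero complex number, γ = s², and let N₁ be a positive integer. With R̂_{i,j} = s^{i+j-2} · Σ_{k=1}^{min(i,j)} C(i-1,k-1)·C(j-1,k-1)·(1 - 1/γ)^{k-1}, define for all positive integers i, j the quantity R_{i,j} = δ_{i,j} + (γ−1)·Σ_{v=1}^{N₁} R̂_{v,i}·R̂_{v,j}, where δ_{i,j} is the Kronecker delta. Then R_{1,1} = γ^{N₁}, and for all positive integers i, j the recursion R_{i,j} = R_{i+1,j+1} − R_{i+1,1}·R_{1,j+1}/R_{1,1} holds. -/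
/-- `R_{i,j} = δ_{i,j} + (γ−1)·Σ_{v=1}^{N₁} R̂_{v,i}·R̂_{v,j}` with `γ = s²`. -/
noncomputable def Rentry (s : ℂ) (N₁ : ℕ) (i j : ℕ) : ℂ :=
  (if i = j then 1 else 0) + (s ^ 2 - 1) * ∑ v ∈ Finset.Icc 1 N₁, Rhat s v i * Rhat s v j

lemma Rhat_zero_left (s : ℂ) (j : ℕ) : Rhat s 0 j = 0 := by
  simp [Rhat]

lemma Rhat_one_left (s : ℂ) {j : ℕ} (hj : 1 ≤ j) : Rhat s 1 j = s ^ (j - 1) := by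
  rw [Rhat, show min 1 j = 1 by omega, show 1 + j - 2 = j - 1 by omega]
  simp

lemma Rhat_one_right (s : ℂ) {i : ℕ} (hi : 1 ≤ i) : Rhat s i 1 = s ^ (i - 1) := by
  rw [Rhat, show min i 1 = 1 by omega, show i + 1 - 2 = i - 1 by omega]
  simp

lemma Rhat_succ_succ (s : ℂ) (c b M : ℕ) (h : min (c + 1) (b + 1) ≤ M) :
    Rhat s (c + 1) (b + 1) =
      s ^ (c + b) * ∑ k ∈ Finset.range M,
        (Nat.choose c k : ℂ) * (Nat.choose b k : ℂ) * (1 - 1 / s ^ 2) ^ k := by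
  rw [Rhat, show c + 1 + (b + 1) - 2 = c + b by omega]
  simp only [Nat.add_sub_cancel]
  congr 1
  refine Finset.sum_subset (Finset.range_subset_range.mpr h) ?_
  intro k hk hk'
  simp only [Finset.mem_range, not_lt] at hk hk'
  have : c < k ∨ b < k := by omega
  rcases this with h' | h' <;> simp [Nat.choose_eq_zero_of_lt h']

lemma key_sum (x : ℂ) (c b : ℕ) : ∀ M : ℕ,
    ∑ k ∈ Finset.range (M + 1), (Nat.choose (c+1) k : ℂ) * (Nat.choose (b+1) k : ℂ) * x ^ k
      = ∑ k ∈ Finset.range (M + 1), (Nat.choose (c+1) k : ℂ) * (Nat.choose b k : ℂ) * x ^ k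
        + ∑ k ∈ Finset.range (M + 1), (Nat.choose c k : ℂ) * (Nat.choose (b+1) k : ℂ) * x ^ k
        - ∑ k ∈ Finset.range (M + 1), (Nat.choose c k : ℂ) * (Nat.choose b k : ℂ) * x ^ k
        + x * ∑ k ∈ Finset.range M, (Nat.choose c k : ℂ) * (Nat.choose b k : ℂ) * x ^ k := by
  intro M
  induction M with
  | zero => simp
  | succ M IH =>
      rw [Finset.sum_range_succ (n := M), Finset.sum_range_succ (n := M + 1),
        Finset.sum_range_succ (n := M + 1), Finset.sum_range_succ (n := M + 1),
        Finset.sum_range_succ (n := M + 1)]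
      have hb1 : ((b+1).choose (M+1) : ℂ) = (b.choose M : ℂ) + (b.choose (M+1) : ℂ) := by
        rw [Nat.choose_succ_succ]; push_cast; ring
      have hc1 : ((c+1).choose (M+1) : ℂ) = (c.choose M : ℂ) + (c.choose (M+1) : ℂ) := by
        rw [Nat.choose_succ_succ]; push_cast; ring
      rw [hb1, hc1]
      linear_combination IH

lemma Rhat_rec_alg (s x T1 T2 T3 T4 T5 : ℂ) (hx : s^2 * x = s^2 - 1)
    (hkey : T1 = T2 + T3 - T4 + x * T5) (h45 : T4 = T5) (n : ℕ) :
    s ^ (n+2) * T1 = s * (s ^ (n+1) * T2) + s * (s ^ (n+1) * T3) - s ^ n * T4 := by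
  rw [pow_succ, pow_succ]
  linear_combination (s^n * s * s) * hkey + (s^n - s^n * s * s) * h45 + (s^n * T5) * hx

lemma Rhat_rec (s : ℂ) (hs : s ≠ 0) {v i : ℕ} (hv : 1 ≤ v) (hi : 1 ≤ i) :
    Rhat s v (i + 1) = s * Rhat s v i + s * Rhat s (v - 1) (i + 1) - Rhat s (v - 1) i := by
  obtain ⟨a, rfl⟩ : ∃ a, v = a + 1 := ⟨v - 1, by omega⟩
  obtain ⟨b, rfl⟩ : ∃ b, i = b + 1 := ⟨i - 1, by omega⟩
  simp only [Nat.add_sub_cancel]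
  rcases Nat.eq_zero_or_pos a with rfl | ha
  · rw [Rhat_zero_left, Rhat_zero_left, Rhat_one_left s (show 1 ≤ b+1+1 by omega),
      Rhat_one_left s (show 1 ≤ b+1 by omega)]
    simp only [Nat.add_sub_cancel]
    rw [pow_succ]
    ring
  obtain ⟨c, rfl⟩ : ∃ c, a = c + 1 := ⟨a - 1, by omega⟩
  have hx : s ^ 2 * (1 - 1 / s ^ 2) = s ^ 2 - 1 := by
    field_simp
  have e1 : Rhat s (c+1+1) (b+1+1) = s ^ (c+1+(b+1)) * ∑ k ∈ Finset.range (c+b+2),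
      (Nat.choose (c+1) k : ℂ) * (Nat.choose (b+1) k : ℂ) * (1 - 1 / s ^ 2) ^ k :=
    Rhat_succ_succ s (c+1) (b+1) _ (by omega)
  have e2 : Rhat s (c+1+1) (b+1) = s ^ (c+1+b) * ∑ k ∈ Finset.range (c+b+2),
      (Nat.choose (c+1) k : ℂ) * (Nat.choose b k : ℂ) * (1 - 1 / s ^ 2) ^ k :=
    Rhat_succ_succ s (c+1) b _ (by omega)
  have e3 : Rhat s (c+1) (b+1+1) = s ^ (c+(b+1)) * ∑ k ∈ Finset.range (c+b+2),
      (Nat.choose c k : ℂ) * (Nat.choose (b+1) k : ℂ) * (1 - 1 / s ^ 2) ^ k :=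
    Rhat_succ_succ s c (b+1) _ (by omega)
  have e4 : Rhat s (c+1) (b+1) = s ^ (c+b) * ∑ k ∈ Finset.range (c+b+2),
      (Nat.choose c k : ℂ) * (Nat.choose b k : ℂ) * (1 - 1 / s ^ 2) ^ k :=
    Rhat_succ_succ s c b _ (by omega)
  have e4' : (∑ k ∈ Finset.range (c+b+2),
      (Nat.choose c k : ℂ) * (Nat.choose b k : ℂ) * (1 - 1 / s ^ 2) ^ k)
      = ∑ k ∈ Finset.range (c+b+1),
      (Nat.choose c k : ℂ) * (Nat.choose b k : ℂ) * (1 - 1 / s ^ 2) ^ k := by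
    rw [Finset.sum_range_succ (n := c+b+1)]
    have : (Nat.choose c (c+b+1) : ℂ) = 0 := by
      rw [Nat.choose_eq_zero_of_lt (by omega)]; simp
    rw [this]; ring
  have hkey := key_sum (1 - 1 / s ^ 2) c b (c + b + 1)
  rw [show c+b+1+1 = c+b+2 from rfl] at hkey
  rw [e1, e2, e3, e4,
    show c+1+(b+1) = (c+b)+2 by omega, show c+1+b = (c+b)+1 by omega,
    show c+(b+1) = (c+b)+1 by omega]
  exact Rhat_rec_alg s _ _ _ _ _ _ hx hkey e4' (c+b)

lemma Rentry_one_one (s : ℂ) (N : ℕ) : Rentry s N 1 1 = (s ^ 2) ^ N := by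
  induction N with
  | zero => simp [Rentry]
  | succ N IH =>
      rw [Rentry] at IH ⊢
      rw [if_pos rfl] at IH ⊢
      rw [Finset.sum_Icc_succ_top (by omega : (1:ℕ) ≤ N+1),
        Rhat_one_right s (by omega : 1 ≤ N+1)]
      simp only [Nat.add_sub_cancel]
      rw [pow_succ]
      linear_combination IH

theorem Rentry_one_one_and_recursion (s : ℂ) (hs : s ≠ 0) (N₁ : ℕ) (hN₁ : 0 < N₁) :
    Rentry s N₁ 1 1 = (s ^ 2) ^ N₁ ∧
      ∀ i j : ℕ, 0 < i → 0 < j →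
        Rentry s N₁ i j =
          Rentry s N₁ (i + 1) (j + 1) -
            Rentry s N₁ (i + 1) 1 * Rentry s N₁ 1 (j + 1) / Rentry s N₁ 1 1 := by
  refine ⟨Rentry_one_one s N₁, ?_⟩
  intro i j hi hj
  -- main induction
  have main : ∀ N : ℕ,
      ((s^2 - 1) * ∑ v ∈ Finset.Icc 1 N, Rhat s v (i+1) * Rhat s v 1
          = s ^ N * (s * Rhat s N (i+1) - Rhat s N i))
      ∧ ((s^2 - 1) * ∑ v ∈ Finset.Icc 1 N, Rhat s v 1 * Rhat s v (j+1)
          = s ^ N * (s * Rhat s N (j+1) - Rhat s N j))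
      ∧ ((s^N * s^N) * ((∑ v ∈ Finset.Icc 1 N, Rhat s v (i+1) * Rhat s v (j+1))
            - ∑ v ∈ Finset.Icc 1 N, Rhat s v i * Rhat s v j)
          = (s^2 - 1) * (∑ v ∈ Finset.Icc 1 N, Rhat s v (i+1) * Rhat s v 1)
            * (∑ v ∈ Finset.Icc 1 N, Rhat s v 1 * Rhat s v (j+1))) := by
    intro N
    induction N with
    | zero => simp [Rhat_zero_left]
    | succ N IH =>
        obtain ⟨ha, hb, hc⟩ := IH
        have h1 : (1:ℕ) ≤ N + 1 := by omega
        have hu : Rhat s (N+1) 1 = s ^ N := by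
          rw [Rhat_one_right s h1]; simp
        have hα := Rhat_rec s hs h1 hi
        have hβ := Rhat_rec s hs h1 hj
        simp only [Nat.add_sub_cancel] at hα hβ
        rw [Finset.sum_Icc_succ_top h1, Finset.sum_Icc_succ_top h1,
          Finset.sum_Icc_succ_top h1, Finset.sum_Icc_succ_top h1, hu]
        rw [pow_succ s N]
        refine ⟨?_, ?_, ?_⟩
        · linear_combination ha - (s^N) * hα
        · linear_combination hb - (s^N) * hβ
        · rw [hα, hβ]
          linear_combination (s^2) * hc
            + ((s^2 - 1) * (∑ v ∈ Finset.Icc 1 N, Rhat s v 1 * Rhat s v (j+1))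
                - s^N * (s * Rhat s (N+1) j + s * Rhat s N (j+1) - Rhat s N j)) * ha
            + (- (s^N * s * Rhat s (N+1) i)) * hb
  obtain ⟨ha, hb, hc⟩ := main N₁
  have h11 : Rentry s N₁ 1 1 = (s^2)^N₁ := Rentry_one_one s N₁
  have hne : ((s:ℂ)^2)^N₁ ≠ 0 := pow_ne_zero _ (pow_ne_zero _ hs)
  have h11' : Rentry s N₁ 1 1 ≠ 0 := by rw [h11]; exact hne
  rw [h11]
  rw [div_eq_mul_inv]
  apply mul_right_cancel₀ hne
  rw [sub_mul, mul_assoc, inv_mul_cancel₀ hne, mul_one]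
  simp only [Rentry, show (i + 1 = j + 1) ↔ (i = j) from by omega]
  rw [if_neg (by omega : ¬ i + 1 = 1), if_neg (by omega : ¬ (1:ℕ) = j + 1)]
  linear_combination (-(s^2 - 1)) * hc
end

section
/- Let ζ be a real number with −1 < ζ < 1 and ζ ≠ 0. Set b₁ = √(1−ζ²)/2, and let χ₁ = i·√((ζ+1)(ζ+3))/2 and χ₂ = i·√((1−ζ)(3−ζ))/2 (both purely imaginary with positive imaginary part). For l = 1, 2 define ρ_l = b₁²/(Im χ_l)² (this equals (Re χ_l ± b₁)²/(Im χ_l)² since Re χ_l = 0). Then ρ₁ = (1−ζ)/(3+ζ) and ρ₂ = (1+ζ)/(3−ζ); moreover, if ζ ∈ (−1,0) then 1/3 < ρ₁ < 3 and ρ₂ < 1/3, while if ζ ∈ (0,1) then ρ₁ < 1/3 and 1/3 < ρ₂ < 3. -/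
theorem rogue_wave_shape_ratios_small_b (ζ : ℝ) (h₁ : -1 < ζ) (h₂ : ζ < 1) (h₀ : ζ ≠ 0)
    (b₁ m₁ m₂ ρ₁ ρ₂ : ℝ)
    (hb : b₁ = Real.sqrt (1 - ζ ^ 2) / 2)
    (hm₁ : m₁ = Real.sqrt ((ζ + 1) * (ζ + 3)) / 2)
    (hm₂ : m₂ = Real.sqrt ((1 - ζ) * (3 - ζ)) / 2)
    (hρ₁ : ρ₁ = b₁ ^ 2 / m₁ ^ 2) (hρ₂ : ρ₂ = b₁ ^ 2 / m₂ ^ 2) :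
    ρ₁ = (1 - ζ) / (3 + ζ) ∧ ρ₂ = (1 + ζ) / (3 - ζ) ∧
      (ζ < 0 → (1 / 3 < ρ₁ ∧ ρ₁ < 3) ∧ ρ₂ < 1 / 3) ∧
      (0 < ζ → ρ₁ < 1 / 3 ∧ (1 / 3 < ρ₂ ∧ ρ₂ < 3)) := by
  have hb2 : b₁ ^ 2 = (1 - ζ ^ 2) / 4 := by
    rw [hb, div_pow, Real.sq_sqrt (by nlinarith)]; ring
  have hm1 : m₁ ^ 2 = (ζ + 1) * (ζ + 3) / 4 := by
    rw [hm₁, div_pow, Real.sq_sqrt (by nlinarith)]; ring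
  have hm2 : m₂ ^ 2 = (1 - ζ) * (3 - ζ) / 4 := by
    rw [hm₂, div_pow, Real.sq_sqrt (by nlinarith)]; ring
  have e1 : ρ₁ = (1 - ζ) / (3 + ζ) := by
    rw [hρ₁, hb2, hm1]
    rw [div_eq_div_iff (by nlinarith) (by linarith)]
    ring
  have e2 : ρ₂ = (1 + ζ) / (3 - ζ) := by
    rw [hρ₂, hb2, hm2]
    rw [div_eq_div_iff (by nlinarith) (by linarith)]
    ring
  refine ⟨e1, e2, ?_, ?_⟩
  · intro hζ
    rw [e1, e2]
    refine ⟨⟨?_, ?_⟩, ?_⟩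
    · rw [lt_div_iff₀ (by linarith)]; nlinarith
    · rw [div_lt_iff₀ (by linarith)]; nlinarith
    · rw [div_lt_iff₀ (by linarith)]; nlinarith
  · intro hζ
    rw [e1, e2]
    refine ⟨?_, ?_, ?_⟩
    · rw [div_lt_iff₀ (by linarith)]; nlinarith
    · rw [lt_div_iff₀ (by linarith)]; nlinarith
    · rw [div_lt_iff₀ (by linarith)]; nlinarith
end

section
/- Let ζ̄ be a real number with ζ̄ ∈ (0, 7−4√3) ∪ (7+4√3, ∞). Then ζ̄² − 14ζ̄ + 1 > 0, and setting b₁ = (ζ̄² − 6ζ̄ + 1)/(4(1+ζ̄)√ζ̄), r = √(ζ̄² − 14ζ̄ + 1)/(4√ζ̄), and m = (1−ζ̄)/(1+ζ̄), we have m ≠ 0 and the two ratios ρ₊ = (r + b₁)²/m² and ρ₋ = (r − b₁)²/m² satisfy ρ₊ > 1/3 and ρ₋ < 1/3. -/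
lemma rogue_aux (X Y : ℝ) (hX : 0 < X) (hP : 0 < X ^ 2 - Y ^ 2) :
    0 < X + Y ∧ Y < X := by
  constructor <;> nlinarith

set_option maxHeartbeats 1000000 in
theorem rogue_wave_shape_ratios_large_b (ζ : ℝ)
    (hζ : (0 < ζ ∧ ζ < 7 - 4 * Real.sqrt 3) ∨ 7 + 4 * Real.sqrt 3 < ζ)
    (b₁ r m ρp ρm : ℝ)
    (hb : b₁ = (ζ ^ 2 - 6 * ζ + 1) / (4 * (1 + ζ) * Real.sqrt ζ))
    (hr : r = Real.sqrt (ζ ^ 2 - 14 * ζ + 1) / (4 * Real.sqrt ζ))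
    (hm : m = (1 - ζ) / (1 + ζ))
    (hρp : ρp = (r + b₁) ^ 2 / m ^ 2) (hρm : ρm = (r - b₁) ^ 2 / m ^ 2) :
    ζ ^ 2 - 14 * ζ + 1 > 0 ∧ m ≠ 0 ∧ ρp > 1 / 3 ∧ ρm < 1 / 3 := by
  have h3 : Real.sqrt 3 ^ 2 = 3 := Real.sq_sqrt (by norm_num)
  have h3n : (0:ℝ) ≤ Real.sqrt 3 := Real.sqrt_nonneg 3
  have h3lb : (3/2 : ℝ) < Real.sqrt 3 := by nlinarith
  have hζ0 : 0 < ζ := by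
    rcases hζ with ⟨h1, _⟩ | h2
    · exact h1
    · nlinarith
  have hD : ζ ^ 2 - 14 * ζ + 1 > 0 := by
    rcases hζ with ⟨h1, h2⟩ | h2
    · nlinarith [mul_pos (by nlinarith : (0:ℝ) < 7 - 4 * Real.sqrt 3 - ζ)
        (by nlinarith : (0:ℝ) < 7 + 4 * Real.sqrt 3 - ζ)]
    · nlinarith [mul_pos (by nlinarith : (0:ℝ) < ζ - (7 - 4 * Real.sqrt 3))
        (by nlinarith : (0:ℝ) < ζ - (7 + 4 * Real.sqrt 3))]
  have hζ1 : ζ ≠ 1 := by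
    rcases hζ with ⟨_, h2⟩ | h2 <;> nlinarith
  have h1ζ : (0:ℝ) < 1 + ζ := by linarith
  have h1ζ' : (1 + ζ) ≠ 0 := ne_of_gt h1ζ
  have hmζ : (1 - ζ) ≠ 0 := sub_ne_zero.mpr (fun h => hζ1 (by linarith))
  have hmne : m ≠ 0 := by
    rw [hm]; exact div_ne_zero hmζ h1ζ'
  have hA : 0 < ζ ^ 2 - 6 * ζ + 1 := by nlinarith
  set s := Real.sqrt ζ with hsdef
  have hs : 0 < s := Real.sqrt_pos.mpr hζ0
  have hs2 : s ^ 2 = ζ := Real.sq_sqrt hζ0.le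
  set d := Real.sqrt (ζ ^ 2 - 14 * ζ + 1) with hddef
  have hd : 0 < d := Real.sqrt_pos.mpr hD
  have hd2 : d ^ 2 = ζ ^ 2 - 14 * ζ + 1 := Real.sq_sqrt hD.le
  have hsne : s ≠ 0 := ne_of_gt hs
  -- key algebraic identity
  have hkey : 36 * (1 + ζ) ^ 2 * d ^ 2 * (ζ ^ 2 - 6 * ζ + 1) ^ 2
      - (3 * (1 + ζ) ^ 2 * d ^ 2 + 3 * (ζ ^ 2 - 6 * ζ + 1) ^ 2 - 16 * ζ * (1 - ζ) ^ 2) ^ 2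
      = 64 * ζ * d ^ 2 * (3 * ζ ^ 4 - 4 * ζ ^ 3 + 50 * ζ ^ 2 - 4 * ζ + 3) := by
    rw [hd2]; ring
  have hg : 0 < 3 * ζ ^ 4 - 4 * ζ ^ 3 + 50 * ζ ^ 2 - 4 * ζ + 3 := by
    nlinarith [sq_nonneg (ζ - 1), sq_nonneg (ζ ^ 2 - ζ), sq_nonneg ζ]
  have e1 : (6 * ((1 + ζ) * d) * (ζ ^ 2 - 6 * ζ + 1)) ^ 2
      = 36 * (1 + ζ) ^ 2 * d ^ 2 * (ζ ^ 2 - 6 * ζ + 1) ^ 2 := by ring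
  have hP : 0 < (6 * ((1 + ζ) * d) * (ζ ^ 2 - 6 * ζ + 1)) ^ 2
      - (3 * (1 + ζ) ^ 2 * d ^ 2 + 3 * (ζ ^ 2 - 6 * ζ + 1) ^ 2 - 16 * ζ * (1 - ζ) ^ 2) ^ 2 := by
    rw [e1, hkey]; positivity
  have hSA : 0 < 6 * ((1 + ζ) * d) * (ζ ^ 2 - 6 * ζ + 1) := by positivity
  obtain ⟨haux1, haux2⟩ := rogue_aux _ _ hSA hP
  -- the two core inequalities
  have ineq1 : 3 * ((1 + ζ) * d + (ζ ^ 2 - 6 * ζ + 1)) ^ 2 > 16 * ζ * (1 - ζ) ^ 2 := by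
    have : 6 * ((1 + ζ) * d) * (ζ ^ 2 - 6 * ζ + 1)
        + (3 * (1 + ζ) ^ 2 * d ^ 2 + 3 * (ζ ^ 2 - 6 * ζ + 1) ^ 2 - 16 * ζ * (1 - ζ) ^ 2)
        = 3 * ((1 + ζ) * d + (ζ ^ 2 - 6 * ζ + 1)) ^ 2 - 16 * ζ * (1 - ζ) ^ 2 := by ring
    linarith
  have ineq2 : 3 * ((1 + ζ) * d - (ζ ^ 2 - 6 * ζ + 1)) ^ 2 < 16 * ζ * (1 - ζ) ^ 2 := by
    have : 6 * ((1 + ζ) * d) * (ζ ^ 2 - 6 * ζ + 1)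
        - (3 * (1 + ζ) ^ 2 * d ^ 2 + 3 * (ζ ^ 2 - 6 * ζ + 1) ^ 2 - 16 * ζ * (1 - ζ) ^ 2)
        = 16 * ζ * (1 - ζ) ^ 2 - 3 * ((1 + ζ) * d - (ζ ^ 2 - 6 * ζ + 1)) ^ 2 := by ring
    linarith
  -- rewrite ρp and ρm
  have hrb : r + b₁ = ((1 + ζ) * d + (ζ ^ 2 - 6 * ζ + 1)) / (4 * (1 + ζ) * s) := by
    rw [hr, hb]; field_simp
  have hrb' : r - b₁ = ((1 + ζ) * d - (ζ ^ 2 - 6 * ζ + 1)) / (4 * (1 + ζ) * s) := by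
    rw [hr, hb]; field_simp
  have hden : 0 < 16 * ζ * (1 - ζ) ^ 2 := by positivity
  have hsqden : (4 * (1 + ζ) * s) ^ 2 = 16 * (1 + ζ) ^ 2 * ζ := by
    rw [mul_pow, mul_pow, hs2]; ring
  have hrp : ρp = ((1 + ζ) * d + (ζ ^ 2 - 6 * ζ + 1)) ^ 2 / (16 * ζ * (1 - ζ) ^ 2) := by
    rw [hρp, hrb, hm, div_pow, div_pow, hsqden]
    field_simp
  have hrm : ρm = ((1 + ζ) * d - (ζ ^ 2 - 6 * ζ + 1)) ^ 2 / (16 * ζ * (1 - ζ) ^ 2) := by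
    rw [hρm, hrb', hm, div_pow, div_pow, hsqden]
    field_simp
  refine ⟨hD, hmne, ?_, ?_⟩
  · rw [hrp, gt_iff_lt, lt_div_iff₀ hden]
    linarith
  · rw [hrm, div_lt_iff₀ hden]
    linarith
end

section
/- Let ζ be a real number with −1 < ζ < 1 and ζ ≠ 0, and set b₁ = √(1−ζ²)/2 (a real number). Define the complex numbers χ₁ = i·√((ζ+1)(ζ+3))/2, λ₁ = i·(ζ+3)·√((ζ+1)(ζ+3))/(4(ζ+1)), χ₂ = i·√((1−ζ)(3−ζ))/2, and λ₂ = i·(ζ−3)·√((1−ζ)(3−ζ))/(4(ζ−1)). For l = 1, 2 let D_l(χ) = (χ − 2λ_l)(χ² − b₁²) − 2χ be a cubic polynomial in χ with complex coefficients. Then for each l = 1, 2, χ_l is a double root of D_l: D_l(χ_l) = 0 and D_l′(χ_l) = 0. -/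
/-!
Put `d = χ² - b₁²`. Then `D(χ) = 0` reads `2λd = χ(d - 2)`, and under it `d · D'(χ) = d² - 2d + 4χ²`,
so `χ` is a double root as soon as `d ≠ 0`, `4χ² = d(2 - d)` and `2λd = χ(d - 2)`. For `χ₁` one has
`d = -(ζ + 1)`, and all three identities are polynomial in `ζ` and `√((ζ + 1)(ζ + 3))`. The second
branch is the first one at `-ζ`, since `b₁` is even in `ζ`.
-/

open Polynomial

section CharacteristicCubic

variable {K : Type*} [Field K]

/-- The Manakov characteristic polynomial in `χ` at spectral parameter `λ`, with `β = b₁²`. -/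
noncomputable def characteristicCubic (lam β : K) : K[X] :=
  (X - C (2 * lam)) * (X ^ 2 - C β) - C 2 * X

@[simp]
theorem eval_characteristicCubic (lam β x : K) :
    (characteristicCubic lam β).eval x = (x - 2 * lam) * (x ^ 2 - β) - 2 * x := by
  simp [characteristicCubic]

@[simp]
theorem eval_derivative_characteristicCubic (lam β x : K) :
    (characteristicCubic lam β).derivative.eval x = (x ^ 2 - β) + 2 * x * (x - 2 * lam) - 2 := by
  simp [characteristicCubic]
  ring

theorem characteristicCubic_double_root {χ lam β d : K} (hd : d ≠ 0) (hβ : χ ^ 2 - β = d)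
    (hχ : 4 * χ ^ 2 = d * (2 - d)) (hlam : 2 * lam * d = χ * (d - 2)) :
    (characteristicCubic lam β).eval χ = 0 ∧ (characteristicCubic lam β).derivative.eval χ = 0 := by
  rw [eval_characteristicCubic, eval_derivative_characteristicCubic, hβ]
  refine ⟨by linear_combination -hlam, ?_⟩
  refine (mul_eq_zero.mp ?_).resolve_left hd
  linear_combination hχ - 2 * χ * hlam

end CharacteristicCubic

theorem characteristicCubic_double_root_branch {z s b : ℂ} (hz : z + 1 ≠ 0)
    (hs : s ^ 2 = (z + 1) * (z + 3)) (hb : 4 * b ^ 2 = 1 - z ^ 2) :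
    let χ := Complex.I * s / 2
    let lam := Complex.I * (z + 3) * s / (4 * (z + 1))
    (characteristicCubic lam (b ^ 2)).eval χ = 0 ∧
      (characteristicCubic lam (b ^ 2)).derivative.eval χ = 0 := by
  intro χ lam
  apply characteristicCubic_double_root (d := -(z + 1)) (neg_ne_zero.mpr hz)
  · linear_combination (-1 / 4 : ℂ) * hs - (1 / 4 : ℂ) * hb + (s ^ 2 / 4) * Complex.I_sq
  · linear_combination (-1 : ℂ) * hs + s ^ 2 * Complex.I_sq
  · simp only [lam, χ]
    field_simp
    ring

theorem chi_double_root_of_characteristic_cubic_general (ζ : ℝ) (h₁ : -1 < ζ) (h₂ : ζ < 1)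
    (b₁ : ℝ) (χ₁ lam₁ χ₂ lam₂ : ℂ)
    (hb : b₁ = Real.sqrt (1 - ζ ^ 2) / 2)
    (hχ₁ : χ₁ = Complex.I * (Real.sqrt ((ζ + 1) * (ζ + 3)) : ℝ) / 2)
    (hlam₁ : lam₁ = Complex.I * ((ζ : ℂ) + 3) * (Real.sqrt ((ζ + 1) * (ζ + 3)) : ℝ) /
      (4 * ((ζ : ℂ) + 1)))
    (hχ₂ : χ₂ = Complex.I * (Real.sqrt ((1 - ζ) * (3 - ζ)) : ℝ) / 2)
    (hlam₂ : lam₂ = Complex.I * ((ζ : ℂ) - 3) * (Real.sqrt ((1 - ζ) * (3 - ζ)) : ℝ) /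
      (4 * ((ζ : ℂ) - 1)))
    (D₁ D₂ : Polynomial ℂ)
    (hD₁ : D₁ = (X - C (2 * lam₁)) * (X ^ 2 - C ((b₁ : ℂ) ^ 2)) - C 2 * X)
    (hD₂ : D₂ = (X - C (2 * lam₂)) * (X ^ 2 - C ((b₁ : ℂ) ^ 2)) - C 2 * X) :
    (D₁.eval χ₁ = 0 ∧ D₁.derivative.eval χ₁ = 0) ∧
      (D₂.eval χ₂ = 0 ∧ D₂.derivative.eval χ₂ = 0) := by
  have hb₁ : 4 * (b₁ : ℂ) ^ 2 = 1 - (ζ : ℂ) ^ 2 := by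
    have : 4 * b₁ ^ 2 = 1 - ζ ^ 2 := by
      rw [hb, div_pow, Real.sq_sqrt (by nlinarith)]
      ring
    exact_mod_cast this
  have hs₁ : ((√((ζ + 1) * (ζ + 3)) : ℝ) : ℂ) ^ 2 = ((ζ : ℂ) + 1) * ((ζ : ℂ) + 3) := by
    exact_mod_cast Real.sq_sqrt (by nlinarith)
  have hs₂ : ((√((1 - ζ) * (3 - ζ)) : ℝ) : ℂ) ^ 2 = (-(ζ : ℂ) + 1) * (-(ζ : ℂ) + 3) := by
    rw [← Complex.ofReal_pow, Real.sq_sqrt (by nlinarith)]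
    push_cast
    ring
  have hζ₁ : (ζ : ℂ) + 1 ≠ 0 := by exact_mod_cast (by linarith : ζ + 1 ≠ 0)
  have hζ₂ : -(ζ : ℂ) + 1 ≠ 0 := by exact_mod_cast (by linarith : -ζ + 1 ≠ 0)
  have hlam₂' : lam₂ =
      Complex.I * (-(ζ : ℂ) + 3) * (√((1 - ζ) * (3 - ζ)) : ℝ) / (4 * (-(ζ : ℂ) + 1)) := by
    rw [hlam₂, ← neg_div_neg_eq]
    ring
  subst hD₁ hD₂ hχ₁ hχ₂ hlam₁
  rw [hlam₂']
  exact ⟨characteristicCubic_double_root_branch hζ₁ hs₁ hb₁,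
    characteristicCubic_double_root_branch hζ₂ hs₂ (by rw [hb₁]; ring)⟩

open Polynomial in
theorem chi_double_root_of_characteristic_cubic (ζ : ℝ) (h₁ : -1 < ζ) (h₂ : ζ < 1)
    (h₀ : ζ ≠ 0) (b₁ : ℝ) (χ₁ lam₁ χ₂ lam₂ : ℂ)
    (hb : b₁ = Real.sqrt (1 - ζ ^ 2) / 2)
    (hχ₁ : χ₁ = Complex.I * (Real.sqrt ((ζ + 1) * (ζ + 3)) : ℝ) / 2)
    (hlam₁ : lam₁ = Complex.I * ((ζ : ℂ) + 3) * (Real.sqrt ((ζ + 1) * (ζ + 3)) : ℝ) /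
      (4 * ((ζ : ℂ) + 1)))
    (hχ₂ : χ₂ = Complex.I * (Real.sqrt ((1 - ζ) * (3 - ζ)) : ℝ) / 2)
    (hlam₂ : lam₂ = Complex.I * ((ζ : ℂ) - 3) * (Real.sqrt ((1 - ζ) * (3 - ζ)) : ℝ) /
      (4 * ((ζ : ℂ) - 1)))
    (D₁ D₂ : Polynomial ℂ)
    (hD₁ : D₁ = (X - C (2 * lam₁)) * (X ^ 2 - C ((b₁ : ℂ) ^ 2)) - C 2 * X)
    (hD₂ : D₂ = (X - C (2 * lam₂)) * (X ^ 2 - C ((b₁ : ℂ) ^ 2)) - C 2 * X) :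
    (D₁.eval χ₁ = 0 ∧ D₁.derivative.eval χ₁ = 0) ∧
      (D₂.eval χ₂ = 0 ∧ D₂.derivative.eval χ₂ = 0) :=
  chi_double_root_of_characteristic_cubic_general ζ h₁ h₂ b₁ χ₁ lam₁ χ₂ lam₂ hb hχ₁ hlam₁ hχ₂ hlam₂
    D₁ D₂ hD₁ hD₂
end

section
/- Let b be a positive real number and define the quartic polynomial Q(X) = (X² − b²)² + 2X² + 2b² ∈ ℂ[X]. Then: (i) Q(x) > 0 for every real number x, so Q has no real roots; (ii) Q has a repeated complex root if and only if b = 1/2. Consequently, for b > 0 with b ≠ 1/2, the four complex roots of Q are distinct, non-real, and form two complex-conjugate pairs. -/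
open Polynomial in
theorem quartic_roots_structure (b : ℝ) (hb : 0 < b) (Q : Polynomial ℂ)
    (hQ : Q = (X ^ 2 - C ((b : ℂ) ^ 2)) ^ 2 + C 2 * X ^ 2 + C (2 * (b : ℂ) ^ 2)) :
    -- (i) Q is positive at every real number, so it has no real roots
    (∀ x : ℝ, 0 < (x ^ 2 - b ^ 2) ^ 2 + 2 * x ^ 2 + 2 * b ^ 2) ∧
    (∀ x : ℝ, Q.eval (x : ℂ) ≠ 0) ∧
    -- (ii) Q has a repeated complex root iff b = 1/2
    ((∃ z : ℂ, Q.eval z = 0 ∧ Q.derivative.eval z = 0) ↔ b = 1 / 2) ∧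
    -- consequently, for b ≠ 1/2 the four roots are distinct, non-real,
    -- and closed under complex conjugation
    (b ≠ 1 / 2 →
      Multiset.card Q.roots = 4 ∧ Q.roots.Nodup ∧
        ∀ z ∈ Q.roots, z.im ≠ 0 ∧ (starRingEnd ℂ) z ∈ Q.roots) := by
  have hpos : ∀ x : ℝ, 0 < (x ^ 2 - b ^ 2) ^ 2 + 2 * x ^ 2 + 2 * b ^ 2 := by
    intro x; positivity
  -- evaluation formula
  have heval : ∀ z : ℂ, Q.eval z = (z ^ 2 - (b : ℂ) ^ 2) ^ 2 + 2 * z ^ 2 + 2 * (b : ℂ) ^ 2 := by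
    intro z; rw [hQ]; simp
  have hevalR : ∀ x : ℝ, Q.eval (x : ℂ) =
      (((x ^ 2 - b ^ 2) ^ 2 + 2 * x ^ 2 + 2 * b ^ 2 : ℝ) : ℂ) := by
    intro x; rw [heval]; push_cast; ring
  have hne : ∀ x : ℝ, Q.eval (x : ℂ) ≠ 0 := by
    intro x; rw [hevalR]
    exact_mod_cast (hpos x).ne'
  -- derivative
  have hder : Q.derivative = C 4 * X ^ 3 + C (4 - 4 * (b : ℂ) ^ 2) * X := by
    rw [hQ]
    simp only [derivative_add, derivative_mul, derivative_pow, derivative_sub,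
      derivative_X, derivative_C]
    push_cast [map_sub, map_mul, map_ofNat]
    ring
  have hderEval : ∀ z : ℂ, Q.derivative.eval z = 4 * z * (z ^ 2 + 1 - (b : ℂ) ^ 2) := by
    intro z; rw [hder]; simp; ring
  -- (ii)
  have hiff : (∃ z : ℂ, Q.eval z = 0 ∧ Q.derivative.eval z = 0) ↔ b = 1 / 2 := by
    constructor
    · rintro ⟨z, h0, h1⟩
      rw [hderEval] at h1
      have hz : z ≠ 0 := by
        rintro rfl
        have := hne 0
        simp at this
        exact this h0
      have hz2 : z ^ 2 = (b : ℂ) ^ 2 - 1 := by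
        rcases mul_eq_zero.mp h1 with h | h
        · rcases mul_eq_zero.mp h with h | h
          · norm_num at h
          · exact absurd h hz
        · linear_combination h
      rw [heval, hz2] at h0
      have hb2 : (b : ℂ) ^ 2 = 1 / 4 := by linear_combination h0 / 4
      have hb2' : b ^ 2 = 1 / 4 := by
        have : ((b ^ 2 : ℝ) : ℂ) = ((1 / 4 : ℝ) : ℂ) := by push_cast; exact hb2
        exact_mod_cast this
      nlinarith [hb]
    · rintro rfl
      refine ⟨Complex.I * (Real.sqrt 3 / 2), ?_, ?_⟩
      · rw [heval]
        have hz2 : (Complex.I * ((Real.sqrt 3 : ℂ) / 2)) ^ 2 = -(3 / 4) := by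
          rw [mul_pow, Complex.I_sq]
          have h3 : ((Real.sqrt 3 : ℝ) : ℂ) ^ 2 = 3 := by
            norm_cast
            rw [Real.sq_sqrt] <;> norm_num
          rw [div_pow, h3]
          norm_num
        rw [hz2]
        push_cast
        norm_num
      · rw [hderEval]
        have hz2 : (Complex.I * ((Real.sqrt 3 : ℂ) / 2)) ^ 2 = -(3 / 4) := by
          rw [mul_pow, Complex.I_sq]
          have h3 : ((Real.sqrt 3 : ℝ) : ℂ) ^ 2 = 3 := by
            norm_cast
            rw [Real.sq_sqrt] <;> norm_num
          rw [div_pow, h3]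
          norm_num
        rw [hz2]
        push_cast
        norm_num
  refine ⟨hpos, hne, hiff, ?_⟩
  intro hbne
  -- degree facts
  have hQ4 : Q = X ^ 4 + C (2 - 2 * (b : ℂ) ^ 2) * X ^ 2 + C ((b : ℂ) ^ 4 + 2 * (b : ℂ) ^ 2) := by
    rw [hQ]; push_cast [map_sub, map_mul, map_add, map_pow, map_ofNat]; ring
  have hdeg : Q.natDegree = 4 := by
    rw [hQ4]; compute_degree!
  have hQne : Q ≠ 0 := by
    intro h; rw [h] at hdeg; simp at hdeg
  have hcard : Multiset.card Q.roots = 4 := by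
    rw [← hdeg]
    exact (Polynomial.splits_iff_card_roots.mp (IsAlgClosed.splits Q))
  refine ⟨hcard, ?_, ?_⟩
  · rw [Multiset.nodup_iff_count_le_one]
    intro z
    rw [Polynomial.count_roots]
    by_contra h
    push_neg at h
    have := (Polynomial.one_lt_rootMultiplicity_iff_isRoot hQne).mp h
    exact hbne (hiff.mp ⟨z, this.1, this.2⟩)
  · intro z hz
    have hroot : Q.eval z = 0 := (Polynomial.mem_roots'.mp hz).2
    constructor
    · intro him
      have : z = ((z.re : ℝ) : ℂ) := by
        apply Complex.ext <;> simp [him]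
      rw [this] at hroot
      exact hne z.re hroot
    · rw [Polynomial.mem_roots']
      refine ⟨hQne, ?_⟩
      show Q.eval _ = 0
      rw [heval] at hroot ⊢
      have : (starRingEnd ℂ) ((z ^ 2 - (b : ℂ) ^ 2) ^ 2 + 2 * z ^ 2 + 2 * (b : ℂ) ^ 2) = 0 := by
        rw [hroot]; simp
      simpa [map_add, map_mul, map_sub, map_pow, map_ofNat, Complex.conj_ofReal] using this
end
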